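/- For a simplex with squared edge lengths x1,...,x6, the cosine of the dihedral angle along the first edge equals (∂Δ/∂x4) / (u(x1,x2,x6)·u(x1,x3,x5))^(1/2), where u(a,b,c) = −a² − b² − c² + 2ab + 2ac + 2bc. -/

import Mathlib

/-!
Put `a = v₁ - v₀`, `b = v₂ - v₀`, `c = v₃ - v₀`. The dihedral angle is the angle between the
components `p`, `q` of `b`, `c` orthogonal to `a`, and `⟪p, q⟫ = ⟪b, c⟫ - ⟪b, a⟫ ⟪c, a⟫ / ‖a‖²`.
Expressing every inner product through squared edge lengths by polarization gives
`4 ‖a‖² ⟪p, q⟫ = ∂Δ/∂x₄`, and the case `c = b` of the same identity gives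
`4 ‖a‖² ‖p‖² = u(x₁, x₂, x₆)`.
-/

noncomputable section

def ufun (a b c : ℝ) : ℝ := -a^2 - b^2 - c^2 + 2*a*b + 2*a*c + 2*b*c

/-- The partial derivative ∂Δ/∂x4 of the Cayley–Menger-type polynomial Δ. -/
def deltaX4 (x1 x2 x3 x4 x5 x6 : ℝ) : ℝ :=
  x1*(-x1+x2+x3-x4+x5+x6) - x1*x4 + x2*x5 + x3*x6 - x2*x3 - x5*x6

def SimplexEdges (v0 v1 v2 v3 : EuclideanSpace ℝ (Fin 3))
    (y1 y2 y3 y4 y5 y6 : ℝ) : Prop :=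
  dist v0 v1 = y1 ∧ dist v0 v2 = y2 ∧ dist v0 v3 = y3 ∧
  dist v2 v3 = y4 ∧ dist v1 v3 = y5 ∧ dist v1 v2 = y6

/-- The dihedral angle of the simplex (v0,v1,v2,v3) along the edge v0v1 (the first
edge): the angle between the components of v2 − v0 and v3 − v0 orthogonal to v1 − v0. -/
def dihedralAngle (v0 v1 v2 v3 : EuclideanSpace ℝ (Fin 3)) : ℝ :=
  InnerProductGeometry.angle
    ((v2 - v0) - (((inner ℝ (v2 - v0) (v1 - v0) : ℝ)) / ‖v1 - v0‖^2) • (v1 - v0))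
    ((v3 - v0) - (((inner ℝ (v3 - v0) (v1 - v0) : ℝ)) / ‖v1 - v0‖^2) • (v1 - v0))

open InnerProductGeometry

namespace Dihedral

variable {V : Type*} [NormedAddCommGroup V] [InnerProductSpace ℝ V]

theorem deltaX4_self (x1 x2 x6 : ℝ) : deltaX4 x1 x2 x2 0 x6 x6 = ufun x1 x2 x6 := by
  unfold deltaX4 ufun
  ring

def orthComponent (a b : V) : V := b - (inner ℝ b a / ‖a‖ ^ 2) • a

theorem dihedralAngle_eq_angle_orthComponent (v0 v1 v2 v3 : EuclideanSpace ℝ (Fin 3)) :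
    dihedralAngle v0 v1 v2 v3 =
      angle (orthComponent (v1 - v0) (v2 - v0)) (orthComponent (v1 - v0) (v3 - v0)) :=
  rfl

theorem inner_orthComponent (a b c : V) :
    inner ℝ (orthComponent a b) (orthComponent a c) =
      inner ℝ b c - inner ℝ b a * inner ℝ c a / ‖a‖ ^ 2 := by
  rcases eq_or_ne a 0 with rfl | ha
  · simp [orthComponent]
  simp only [orthComponent, inner_sub_left, inner_sub_right, real_inner_smul_left,
    real_inner_smul_right, real_inner_self_eq_norm_sq, real_inner_comm a]
  field_simp
  ring

theorem four_mul_inner_orthComponent {a : V} (ha : a ≠ 0) (b c : V) :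
    4 * ‖a‖ ^ 2 * inner ℝ (orthComponent a b) (orthComponent a c) =
      deltaX4 (‖a‖ ^ 2) (‖b‖ ^ 2) (‖c‖ ^ 2) (‖b - c‖ ^ 2) (‖a - c‖ ^ 2) (‖a - b‖ ^ 2) := by
  rw [inner_orthComponent, norm_sub_sq_real b c, norm_sub_sq_real a c, norm_sub_sq_real a b,
    real_inner_comm a b, real_inner_comm a c]
  unfold deltaX4
  field_simp
  ring

theorem four_mul_norm_orthComponent_sq {a : V} (ha : a ≠ 0) (b : V) :
    4 * ‖a‖ ^ 2 * ‖orthComponent a b‖ ^ 2 = ufun (‖a‖ ^ 2) (‖b‖ ^ 2) (‖a - b‖ ^ 2) := by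
  rw [← real_inner_self_eq_norm_sq (orthComponent a b), four_mul_inner_orthComponent ha,
    sub_self, norm_zero, ← deltaX4_self]
  norm_num

theorem cos_angle_eq_mul_inner_div_sqrt {t : ℝ} (ht : 0 < t) (p q : V) :
    Real.cos (angle p q) = t * inner ℝ p q / √((t * ‖p‖ ^ 2) * (t * ‖q‖ ^ 2)) := by
  have hsqrt : √((t * ‖p‖ ^ 2) * (t * ‖q‖ ^ 2)) = t * (‖p‖ * ‖q‖) := by
    rw [show (t * ‖p‖ ^ 2) * (t * ‖q‖ ^ 2) = (t * (‖p‖ * ‖q‖)) ^ 2 by ring]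
    exact Real.sqrt_sq (by positivity)
  rw [cos_angle, hsqrt, mul_div_mul_left _ _ ht.ne']

theorem cos_angle_orthComponent {a : V} (ha : a ≠ 0) (b c : V) :
    Real.cos (angle (orthComponent a b) (orthComponent a c)) =
      deltaX4 (‖a‖ ^ 2) (‖b‖ ^ 2) (‖c‖ ^ 2) (‖b - c‖ ^ 2) (‖a - c‖ ^ 2) (‖a - b‖ ^ 2) /
        √(ufun (‖a‖ ^ 2) (‖b‖ ^ 2) (‖a - b‖ ^ 2) * ufun (‖a‖ ^ 2) (‖c‖ ^ 2) (‖a - c‖ ^ 2)) := by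
  rw [cos_angle_eq_mul_inner_div_sqrt (t := 4 * ‖a‖ ^ 2) (by positivity),
    four_mul_inner_orthComponent ha, four_mul_norm_orthComponent_sq ha,
    four_mul_norm_orthComponent_sq ha]

end Dihedral

open Dihedral

/-- cos of the dihedral angle along the first edge equals
(∂Δ/∂x4)/√(u(x1,x2,x6)·u(x1,x3,x5)). -/
theorem cos_dihedral_eq
    (y1 y2 y3 y4 y5 y6 : ℝ) (v0 v1 v2 v3 : EuclideanSpace ℝ (Fin 3))
    (hedges : SimplexEdges v0 v1 v2 v3 y1 y2 y3 y4 y5 y6)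
    (hnd : AffineIndependent ℝ ![v0, v1, v2, v3]) :
    Real.cos (dihedralAngle v0 v1 v2 v3) =
      deltaX4 (y1^2) (y2^2) (y3^2) (y4^2) (y5^2) (y6^2) /
        Real.sqrt (ufun (y1^2) (y2^2) (y6^2) * ufun (y1^2) (y3^2) (y5^2)) := by
  obtain ⟨rfl, rfl, rfl, rfl, rfl, rfl⟩ := hedges
  have h01 : v1 - v0 ≠ 0 :=
    sub_ne_zero.mpr (hnd.injective.ne (show (1 : Fin 4) ≠ 0 by decide))
  have hdist (u w : EuclideanSpace ℝ (Fin 3)) : dist u w = ‖(u - v0) - (w - v0)‖ := by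
    rw [sub_sub_sub_cancel_right, dist_eq_norm]
  rw [dihedralAngle_eq_angle_orthComponent, cos_angle_orthComponent h01, hdist v2 v3,
    hdist v1 v3, hdist v1 v2, dist_comm v0 v1, dist_comm v0 v2, dist_comm v0 v3,
    dist_eq_norm, dist_eq_norm, dist_eq_norm]
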